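/- arXiv:2108.09573 — 7 statements merged into one kernel-verified Lean document; each statement's English description precedes it below -/
import Mathlib

section
/- Let G be a finite connected simple graph with minimum degree at least 3 and at least one vertex. Then the vertex metric dimension of G satisfies dim(G) < 2c(G) - 1, where c(G) = |E(G)| - |V(G)| + 1 is the cyclomatic number. -/
open SimpleGraph

variable {V : Type*}

/-- `S` is a vertex metric generator of `G`. -/
def IsVMG (G : SimpleGraph V) (S : Set V) : Prop :=
  ∀ x x' : V, x ≠ x' → ∃ s ∈ S, G.dist s x ≠ G.dist s x'

/-- The vertex metric dimension of `G`. -/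
noncomputable def vdim (G : SimpleGraph V) [Fintype V] : ℕ :=
  sInf {n | ∃ S : Finset V, IsVMG G ↑S ∧ S.card = n}

/-- Distance from a vertex to an edge: minimum over the endpoints. -/
noncomputable def eDist (G : SimpleGraph V) (s : V) : Sym2 V → ℕ :=
  Sym2.lift ⟨fun a b => min (G.dist s a) (G.dist s b), fun a b => min_comm _ _⟩

/-- `S` is an edge metric generator of `G`. -/
def IsEMG (G : SimpleGraph V) (S : Set V) : Prop :=
  ∀ e ∈ G.edgeSet, ∀ e' ∈ G.edgeSet, e ≠ e' → ∃ s ∈ S, eDist G s e ≠ eDist G s e'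

/-- The edge metric dimension of `G`. -/
noncomputable def edim (G : SimpleGraph V) [Fintype V] : ℕ :=
  sInf {n | ∃ S : Finset V, IsEMG G ↑S ∧ S.card = n}


/-- For a connected graph with `δ(G) ≥ 3`, `dim(G) < 2c(G) - 1`. -/
theorem stmt1 {V : Type*} [Fintype V] [Nonempty V] (G : SimpleGraph V)
    [DecidableRel G.Adj] (hc : G.Connected) (hδ : ∀ v : V, 3 ≤ G.degree v) :
    (vdim G : ℤ) < 2 * ((G.edgeFinset.card : ℤ) - (Fintype.card V : ℤ) + 1) - 1 := by
  have hgen : IsVMG G ↑(Finset.univ : Finset V) := by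
    intro x x' hne
    refine ⟨x, Finset.mem_coe.mpr (Finset.mem_univ x), ?_⟩
    rw [SimpleGraph.dist_self]
    exact fun h => hne (hc.dist_eq_zero_iff.mp h.symm)
  have hle : vdim G ≤ Fintype.card V :=
    Nat.sInf_le ⟨Finset.univ, hgen, Finset.card_univ⟩
  have hdeg : 3 * Fintype.card V ≤ 2 * G.edgeFinset.card := by
    have h := G.sum_degrees_eq_twice_card_edges
    calc 3 * Fintype.card V = ∑ _v : V, 3 := by simp [Nat.mul_comm]
      _ ≤ ∑ v : V, G.degree v := Finset.sum_le_sum (fun v _ => hδ v)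
      _ = 2 * G.edgeFinset.card := h
  have h1 : (vdim G : ℤ) ≤ Fintype.card V := by exact_mod_cast hle
  have h2 : (3 : ℤ) * Fintype.card V ≤ 2 * G.edgeFinset.card := by exact_mod_cast hdeg
  linarith
end

section
/- Let G be a finite connected simple graph with minimum degree at least 3. Then the edge metric dimension of G satisfies edim(G) < 2c(G) - 1, where c(G) is the cyclomatic number. -/
open SimpleGraph

variable {V : Type*}

/-- For a connected graph with `δ(G) ≥ 3`, `edim(G) < 2c(G) - 1`. -/
theorem stmt2 {V : Type*} [Fintype V] (G : SimpleGraph V)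
    [DecidableRel G.Adj] (hc : G.Connected) (hδ : ∀ v : V, 3 ≤ G.degree v) :
    (edim G : ℤ) < 2 * ((G.edgeFinset.card : ℤ) - (Fintype.card V : ℤ) + 1) - 1 := by
  have hEMG : IsEMG G ↑(Finset.univ : Finset V) := by
    intro e he e' he' hne
    induction e using Sym2.ind with | _ a b => ?_
    induction e' using Sym2.ind with | _ c d => ?_
    rw [SimpleGraph.mem_edgeSet] at he he'
    obtain ⟨x, hxe, hxc, hxd⟩ : ∃ x, (x = a ∨ x = b) ∧ x ≠ c ∧ x ≠ d := by
      by_cases hac : a = c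
      · subst hac
        refine ⟨b, Or.inr rfl, fun h => he.ne h.symm, fun h => hne ?_⟩
        rw [h]
      · by_cases had : a = d
        · subst had
          refine ⟨b, Or.inr rfl, fun h => hne ?_, fun h => he.ne h.symm⟩
          rw [h, Sym2.eq_swap]
        · exact ⟨a, Or.inl rfl, hac, had⟩
    refine ⟨x, Finset.mem_coe.mpr (Finset.mem_univ x), ?_⟩
    have h1 : eDist G x s(a, b) = 0 := by
      rcases hxe with rfl | rfl <;> simp [eDist]
    have h2 : eDist G x s(c, d) ≠ 0 := by
      simp only [eDist, Sym2.lift_mk]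
      have p1 := hc.pos_dist_of_ne hxc
      have p2 := hc.pos_dist_of_ne hxd
      omega
    rw [h1]
    exact fun h => h2 h.symm
  have hle : edim G ≤ Fintype.card V :=
    Nat.sInf_le ⟨Finset.univ, hEMG, Finset.card_univ⟩
  have hdeg : 3 * Fintype.card V ≤ 2 * G.edgeFinset.card := by
    calc 3 * Fintype.card V = ∑ _v : V, 3 := by simp [mul_comm]
    _ ≤ ∑ v, G.degree v := Finset.sum_le_sum fun v _ => hδ v
    _ = 2 * G.edgeFinset.card := G.sum_degrees_eq_twice_card_edges
  push_cast
  omega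
end

section
/- Let G be a finite connected simple graph, let v ≠ v' be two vertices, and let x, x', s, s' be vertices such that: every shortest path from x to s' passes through v then v' (so d(x,s') = d(x,v) + d(v,v') + d(v',s')), every shortest path from x' to s passes through v' then v (so d(x',s) = d(x',v') + d(v',v) + d(v,s)), d(x',s') ≤ d(x',v') + d(v',s'), and d(x,s) ≤ d(x,v) + d(v,s). Then s or s' distinguishes x and x', i.e., d(x,s) ≠ d(x',s) or d(x,s') ≠ d(x',s'). -/
open SimpleGraph

/-- If every shortest `x`–`s'` path passes through `v` then `v'`, every shortest
`x'`–`s` path passes through `v'` then `v`, and `v ≠ v'`, then `s` or `s'`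
distinguishes `x` and `x'`. -/
theorem stmt12 {V : Type*} (G : SimpleGraph V) (hc : G.Connected)
    (v v' x x' s s' : V) (hvv' : v ≠ v')
    (h1 : G.dist x s' = G.dist x v + G.dist v v' + G.dist v' s')
    (h2 : G.dist x' s = G.dist x' v' + G.dist v' v + G.dist v s)
    (h3 : G.dist x' s' ≤ G.dist x' v' + G.dist v' s')
    (h4 : G.dist x s ≤ G.dist x v + G.dist v s) :
    G.dist x s ≠ G.dist x' s ∨ G.dist x s' ≠ G.dist x' s' := by
  by_contra h
  push_neg at h
  obtain ⟨e1, e2⟩ := h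
  have hpos : 0 < G.dist v v' := hc.pos_dist_of_ne hvv'
  have hcomm : G.dist v' v = G.dist v v' := SimpleGraph.dist_comm
  omega
end

section
/- Let F be a finite forest whose vertex set is partitioned into two sides 𝒢 and 𝒱 (F is bipartite with parts 𝒢 and 𝒱), where |𝒢| = q and every leaf of F belongs to 𝒢. Then there exists a set E' ⊆ E(F) with |E'| ≤ q - 1 such that every vertex of 𝒱 is incident to at most one edge of E(F) \ E'. -/
/-!
A forest whose edges all have their endpoints in a finite set `S` has at most `|S| - 1` edges:
its restriction to `S` extends to a spanning tree of `S`. No edge joins two vertices outside `A`,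
so the edges chosen at the non-isolated vertices `B` outside `A`, one per vertex, are distinct,
and each vertex outside `A` meets no other chosen edge. Deleting all the other edges removes at
most `(q + |B| - 1) - |B| = q - 1` edges.
-/

open SimpleGraph Finset

namespace SimpleGraph

variable {V : Type*} [Fintype V] {G : SimpleGraph V} [DecidableRel G.Adj]

theorem IsAcyclic.card_edgeFinset_le_card_sub_one (hG : G.IsAcyclic) {s : Finset V}
    (hs : G.support ⊆ s) : #G.edgeFinset ≤ #s - 1 := by
  rcases s.eq_empty_or_nonempty with rfl | ⟨v, hv⟩
  · have : G = ⊥ := by simpa [support_eq_bot_iff] using hs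
    subst this
    simp
  have : Nonempty s := ⟨⟨v, hv⟩⟩
  obtain ⟨T, hGT, -, hT⟩ := (connected_top (V := s)).exists_isTree_le_of_le_of_isAcyclic
    le_top (hG.induce s)
  classical
  have hT_card : #T.edgeFinset + 1 = #s := by simpa using hT.card_edgeFinset
  have hG_le_T : #G.edgeFinset ≤ #T.edgeFinset := by
    rw [← card_edgeFinset_induce_of_support_subset hs]
    convert card_le_card (edgeFinset_mono hGT)
  omega

theorem IsIndepSet.exists_card_incidenceFinset_sdiff_le_one [DecidableEq V] {I : Finset V}
    (hI : G.IsIndepSet I) :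
    ∃ E' ⊆ G.edgeFinset, #E' + #{v ∈ I | v ∈ G.support} = #G.edgeFinset ∧
      ∀ v ∈ I, #(G.incidenceFinset v \ E') ≤ 1 := by
  have : ∀ v, ∃ w, v ∈ G.support → G.Adj v w := fun v =>
    if hv : v ∈ G.support then hv.imp fun _ h _ => h else ⟨v, fun h => (hv h).elim⟩
  choose nbr hnbr using this
  set J := {v ∈ I | v ∈ G.support}
  set K := J.image fun v => s(v, nbr v)
  have hJ : ∀ v ∈ J, v ∈ I ∧ G.Adj v (nbr v) := fun v hv => by
    rw [mem_filter] at hv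
    exact ⟨hv.1, hnbr v hv.2⟩
  have hKE : K ⊆ G.edgeFinset := by
    simp only [K, image_subset_iff, mem_edgeFinset, mem_edgeSet]
    exact fun v hv => (hJ v hv).2
  have hK_eq : ∀ u ∈ J, ∀ v ∈ I, v ∈ s(u, nbr u) → u = v := by
    intro u hu v hv huv
    obtain ⟨huI, hadj⟩ := hJ u hu
    rcases Sym2.mem_iff.mp huv with rfl | rfl
    · rfl
    · exact (hI huI hv hadj.ne hadj).elim
  have hK_card : #K = #J := by
    refine card_image_of_injOn fun u hu v hv huv => ?_
    exact hK_eq u hu v (hJ v hv).1 (huv ▸ Sym2.mem_mk_left v (nbr v))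
  refine ⟨G.edgeFinset \ K, sdiff_subset, by rw [card_sdiff_of_subset hKE, ← hK_card,
    Nat.sub_add_cancel (card_le_card hKE)], fun v hv => ?_⟩
  have hsub : G.incidenceFinset v \ (G.edgeFinset \ K) ⊆ {s(v, nbr v)} := by
    intro e he
    obtain ⟨hev, heE'⟩ := mem_sdiff.mp he
    have heK : e ∈ K := by
      by_contra heK
      exact heE' (mem_sdiff.mpr ⟨incidenceFinset_subset G v hev, heK⟩)
    obtain ⟨u, hu, rfl⟩ := mem_image.mp heK
    rw [hK_eq u hu v hv ((mem_incidenceFinset G v _).mp hev).2, mem_singleton]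
  exact (card_le_card hsub).trans_eq (card_singleton _)

end SimpleGraph

theorem stmt13_general {W : Type*} [Fintype W] [DecidableEq W] (F : SimpleGraph W)
    [DecidableRel F.Adj] (hF : F.IsAcyclic)
    (A : Finset W) (q : ℕ) (hq : A.card = q)
    (hbip : ∀ a b : W, F.Adj a b → (a ∈ A ↔ b ∉ A)) :
    ∃ E' ⊆ F.edgeFinset, E'.card ≤ q - 1 ∧
      ∀ v ∉ A, (F.incidenceFinset v \ E').card ≤ 1 := by
  have hindep : F.IsIndepSet ↑Aᶜ := fun u hu v hv _ hadj =>
    (mem_compl.mp hu) ((hbip u v hadj).mpr (mem_compl.mp hv))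
  obtain ⟨E', hE'F, hE'card, hE'⟩ := hindep.exists_card_incidenceFinset_sdiff_le_one
  set B := {v ∈ Aᶜ | v ∈ F.support}
  have hsupp : F.support ⊆ ↑(A ∪ B) := fun v hv => by
    by_cases hvA : v ∈ A
    · exact mem_union_left _ hvA
    · exact mem_union_right _ (mem_filter.mpr ⟨mem_compl.mpr hvA, hv⟩)
  have hforest := hF.card_edgeFinset_le_card_sub_one hsupp
  have hunion := card_union_le A B
  exact ⟨E', hE'F, by omega, fun v hv => hE' v (mem_compl.mpr hv)⟩

/-- In a finite forest `F` bipartite with parts `A` (of size `q`) and its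
complement, in which every leaf belongs to `A`, there is a set `E'` of at most
`q - 1` edges such that every vertex outside `A` is incident to at most one edge
outside `E'`. -/
theorem stmt13 {W : Type*} [Fintype W] [DecidableEq W] (F : SimpleGraph W)
    [DecidableRel F.Adj] (hF : F.IsAcyclic)
    (A : Finset W) (q : ℕ) (hq : A.card = q) (hq1 : 1 ≤ q)
    (hbip : ∀ a b : W, F.Adj a b → (a ∈ A ↔ b ∉ A))
    (hleaf : ∀ v : W, F.degree v = 1 → v ∈ A) :
    ∃ E' ⊆ F.edgeFinset, E'.card ≤ q - 1 ∧
      ∀ v ∉ A, (F.incidenceFinset v \ E').card ≤ 1 :=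
  stmt13_general F hF A q hq hbip
end

section
/- The edge metric dimension of the cycle graph C_n (n ≥ 3) equals 2. -/
open SimpleGraph

variable {V : Type*}

/-!
The graph distance on `C_n` is the cyclic distance `min (v - u) (u - v)` on `ℤ/n`. Vertex `0` sees
the edge `{i, i+1}` at distance `min i (n-1-i)`, which determines the edge up to the reflection
`i ↦ n-1-i`, and vertex `1` sees `{i, i+1}` as vertex `0` sees `{i-1, i}`, which breaks the tie; so
`{0, 1}` is an edge metric generator. No single vertex `x` is one, because both edges at `x` are at
distance `0` from it.
-/

section EdgeMetricDimension

variable {G : SimpleGraph V}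

@[simp]
lemma eDist_mk (s a b : V) : eDist G s s(a, b) = min (G.dist s a) (G.dist s b) := rfl

lemma IsEMG.mono {S T : Set V} (hS : IsEMG G S) (hST : S ⊆ T) : IsEMG G T := by
  intro e he e' he' hne
  obtain ⟨s, hs, hd⟩ := hS e he e' he' hne
  exact ⟨s, hST hs, hd⟩

lemma not_isEMG_singleton {x y z : V} (hy : G.Adj x y) (hz : G.Adj x z) (hyz : y ≠ z) :
    ¬ IsEMG G {x} := by
  intro h
  obtain ⟨s, rfl, hd⟩ := h s(x, y) hy s(x, z) hz (fun h => hyz (Sym2.congr_right.1 h))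
  simp at hd

lemma IsEMG.two_le_card [Nonempty V] (h : ∀ x, ∃ y z, G.Adj x y ∧ G.Adj x z ∧ y ≠ z)
    {S : Finset V} (hS : IsEMG G S) : 2 ≤ S.card := by
  by_contra! hlt
  obtain ⟨x, hx⟩ := Finset.card_le_one_iff_subset_singleton.1 (Nat.le_of_lt_succ hlt)
  obtain ⟨y, z, hy, hz, hyz⟩ := h x
  exact not_isEMG_singleton hy hz hyz (hS.mono (by simpa using Finset.coe_subset.2 hx))

lemma edim_eq_card [Fintype V] {S : Finset V} (hS : IsEMG G S)
    (hmin : ∀ T : Finset V, IsEMG G T → S.card ≤ T.card) : edim G = S.card :=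
  le_antisymm (Nat.sInf_le ⟨S, hS, rfl⟩)
    (le_csInf ⟨_, S, hS, rfl⟩ (by rintro _ ⟨T, hT, rfl⟩; exact hmin T hT))

end EdgeMetricDimension

lemma SimpleGraph.Walk.le_add_length {G : SimpleGraph V} {f : V → ℕ}
    (hf : ∀ x y, G.Adj x y → f x ≤ f y + 1) {u v : V} (p : G.Walk u v) :
    f u ≤ f v + p.length := by
  induction p with
  | nil => simp
  | cons h _ ih =>
    have := hf _ _ h
    rw [Walk.length_cons]
    omega

lemma SimpleGraph.Reachable.le_add_dist {G : SimpleGraph V} {f : V → ℕ}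
    (hf : ∀ x y, G.Adj x y → f x ≤ f y + 1) {u v : V} (huv : G.Reachable u v) :
    f u ≤ f v + G.dist u v := by
  obtain ⟨p, hp⟩ := huv.exists_walk_length_eq_dist
  exact hp ▸ p.le_add_length hf

lemma Fin.val_sub_eq_ite {m : ℕ} (a b : Fin m) :
    (a - b).val = if b.val ≤ a.val then a.val - b.val else m + a.val - b.val := by
  split_ifs with h
  · exact Fin.coe_sub_iff_le.2 h
  · exact Fin.coe_sub_iff_lt.2 (not_le.1 h)

section CycleGraph

open Fin.NatCast

variable {n : ℕ}

lemma cycleGraph_adj_add_one (u : Fin (n + 2)) : (cycleGraph (n + 2)).Adj u (u + 1) :=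
  cycleGraph_adj.2 (Or.inr (add_sub_cancel_left u 1))

lemma cycleGraph_dist_add_natCast_le (u : Fin (n + 2)) (k : ℕ) :
    (cycleGraph (n + 2)).dist u (u + k) ≤ k := by
  induction k with
  | zero => simp
  | succ k ih =>
    calc (cycleGraph (n + 2)).dist u (u + (k + 1 : ℕ))
        ≤ (cycleGraph (n + 2)).dist u (u + k) +
            (cycleGraph (n + 2)).dist (u + k) (u + k + 1) := by
          rw [Nat.cast_succ, ← add_assoc]
          exact cycleGraph_connected.dist_triangle
      _ = (cycleGraph (n + 2)).dist u (u + k) + 1 := by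
          rw [dist_eq_one_iff_adj.2 (cycleGraph_adj_add_one _)]
      _ ≤ k + 1 := by omega

lemma cycleGraph_dist_le (u v : Fin (n + 2)) : (cycleGraph (n + 2)).dist u v ≤ (v - u).val := by
  simpa using cycleGraph_dist_add_natCast_le u (v - u).val

lemma cycleGraph_dist (u v : Fin (n + 2)) :
    (cycleGraph (n + 2)).dist u v = min (v - u).val (u - v).val := by
  refine le_antisymm
    (le_min (cycleGraph_dist_le u v) (dist_comm.trans_le (cycleGraph_dist_le v u))) ?_
  have hstep : ∀ x y : Fin (n + 2), (cycleGraph (n + 2)).Adj x y →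
      min (v - x).val (x - v).val ≤ min (v - y).val (y - v).val + 1 := by
    intro x y hxy
    have hxy' : (x - y).val = 1 ∨ (y - x).val = 1 := by
      rcases cycleGraph_adj.1 hxy with h | h <;> simp [h]
    simp only [Fin.val_sub_eq_ite] at hxy' ⊢
    have := x.isLt; have := y.isLt; have := v.isLt
    split_ifs at hxy' ⊢ <;> omega
  simpa using (cycleGraph_connected.preconnected u v).le_add_dist hstep

lemma exists_eq_of_mem_edgeSet_cycleGraph {e : Sym2 (Fin (n + 2))}
    (he : e ∈ (cycleGraph (n + 2)).edgeSet) :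
    ∃ i, e = s(i, i + 1) := by
  induction e using Sym2.ind with
  | _ u v =>
    rcases cycleGraph_adj.1 ((mem_edgeSet _).1 he) with h | h
    · exact ⟨v, by rw [eq_add_of_sub_eq' h, Sym2.eq_swap]⟩
    · exact ⟨u, by rw [eq_add_of_sub_eq' h]⟩

lemma cycleGraph_dist_add_add (u v a : Fin (n + 2)) :
    (cycleGraph (n + 2)).dist (u + a) (v + a) = (cycleGraph (n + 2)).dist u v := by
  simp only [cycleGraph_dist, add_sub_add_right_eq_sub]

lemma cycleGraph_eDist_add_add (s u v a : Fin (n + 2)) :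
    eDist (cycleGraph (n + 2)) (s + a) s(u + a, v + a) =
      eDist (cycleGraph (n + 2)) s s(u, v) := by
  simp only [eDist_mk, cycleGraph_dist_add_add]

lemma cycleGraph_dist_zero_left (v : Fin (n + 2)) :
    (cycleGraph (n + 2)).dist 0 v = min v.val (n + 2 - v.val) := by
  rw [cycleGraph_dist, sub_zero, zero_sub, Fin.val_neg]
  split_ifs with h
  · simp [h]
  · rfl

lemma cycleGraph_eDist_zero (i : Fin (n + 2)) :
    eDist (cycleGraph (n + 2)) 0 s(i, i + 1) = min i.val (n + 1 - i.val) := by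
  rw [eDist_mk, cycleGraph_dist_zero_left, cycleGraph_dist_zero_left, Fin.val_add_one]
  have := i.isLt
  split_ifs with h
  · rw [h, Fin.val_last]; omega
  · rw [Fin.ext_iff, Fin.val_last] at h; omega

lemma cycleGraph_eDist_one (i : Fin (n + 2)) :
    eDist (cycleGraph (n + 2)) 1 s(i, i + 1) = min (i - 1).val (n + 1 - (i - 1).val) := by
  rw [← cycleGraph_eDist_zero, ← cycleGraph_eDist_add_add 0 _ _ 1, zero_add, sub_add_cancel]

lemma cycleGraph_isEMG_zero_one :
    IsEMG (cycleGraph (n + 3)) ↑({0, 1} : Finset (Fin (n + 3))) := by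
  intro e he e' he' hne
  obtain ⟨i, rfl⟩ := exists_eq_of_mem_edgeSet_cycleGraph he
  obtain ⟨j, rfl⟩ := exists_eq_of_mem_edgeSet_cycleGraph he'
  by_contra! hc
  have h0 := hc 0 (by simp)
  have h1 := hc 1 (by simp)
  rw [cycleGraph_eDist_zero, cycleGraph_eDist_zero] at h0
  rw [cycleGraph_eDist_one, cycleGraph_eDist_one, Fin.coe_sub_one, Fin.coe_sub_one] at h1
  simp only [Fin.ext_iff, Fin.val_zero] at h1
  have := i.isLt
  have := j.isLt
  split_ifs at h1
  all_goals exact hne (congrArg (fun k => s(k, k + 1)) (Fin.ext (by omega)))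

lemma cycleGraph_exists_two_neighbors (x : Fin (n + 3)) :
    ∃ y z, (cycleGraph (n + 3)).Adj x y ∧ (cycleGraph (n + 3)).Adj x z ∧ y ≠ z := by
  refine ⟨x + 1, x - 1, cycleGraph_adj_add_one x,
    cycleGraph_adj.2 (Or.inl (sub_sub_cancel x 1)), ?_⟩
  intro h
  rw [Fin.ext_iff, Fin.val_add_one, Fin.coe_sub_one] at h
  simp only [Fin.ext_iff, Fin.val_last, Fin.val_zero] at h
  have := x.isLt
  split_ifs at h <;> omega

end CycleGraph

/-- The edge metric dimension of the cycle `C_n` (`n ≥ 3`) equals 2. -/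
theorem stmt15 (n : ℕ) (hn : 3 ≤ n) : edim (SimpleGraph.cycleGraph n) = 2 := by
  obtain ⟨m, rfl⟩ : ∃ m, n = m + 3 := ⟨n - 3, by omega⟩
  have hcard : ({0, 1} : Finset (Fin (m + 3))).card = 2 := Finset.card_pair (by simp)
  rw [← hcard]
  refine edim_eq_card cycleGraph_isEMG_zero_one fun T hT => ?_
  rw [hcard]
  exact hT.two_le_card cycleGraph_exists_two_neighbors
end

section
/- Let G be a graph consisting of two cycles of lengths g₁ and g₂ sharing exactly one common vertex w (a daisy graph with two petals), where both g₁ and g₂ are even. Then dim(G) = 3 = 2c(G) - 1. -/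
/-!
Write `xᵢ`, `yⱼ` for the vertices of the two petals, `x₀ = y₀ = w`. Within a petal distances are
the cyclic ones and between petals every geodesic passes through `w`; the lower bounds come from
integer potentials that change by at most one along every edge.

The neighbours `x₁, x_{g₁-1}, y₁` of `w` resolve `G`: the distance to `y₁` gives the distance of
`xᵢ` to `w`, which together with the distance to `x₁` fixes `i`; and a vertex of the first petal
whose distances to `x₁` and to `x_{g₁-1}` both exceed its distance to `w` by one is `w` itself.
No two vertices resolve `G`. A set inside one petal does not separate the two neighbours of `w`
on the other petal. A pair `{xᵢ, yⱼ}` does not separate the two neighbours of `xᵢ` when `xᵢ` is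
antipodal to `w` (symmetrically for `yⱼ`), and otherwise it does not separate the neighbours of
`w` lying beyond `w` as seen from `xᵢ` and from `yⱼ`; evenness makes this case split exhaustive.
Finally `|E| = g₁ + g₂` and `|V| = g₁ + g₂ - 1`.
-/

open SimpleGraph

variable {V : Type*}

-- `i - j + (j - i)` is `|i - j|` in truncated ℕ-subtraction.
def cycDist (g i j : ℕ) : ℕ := min (i - j + (j - i)) (g - (i - j + (j - i)))

theorem cycDist_zero_one {g : ℕ} (hg : 2 ≤ g) : cycDist g 0 1 = 1 := by
  simp only [cycDist]; omega

theorem cycDist_zero_sub_one {g : ℕ} (hg : 2 ≤ g) : cycDist g 0 (g - 1) = 1 := by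
  simp only [cycDist]; omega

theorem cycDist_one_le_add_one (g i : ℕ) : cycDist g 1 i ≤ cycDist g 0 i + 1 := by
  simp only [cycDist]; omega

theorem eq_of_cycDist_eq {g i i' : ℕ} (hi : i < g) (hi' : i' < g)
    (h₁ : cycDist g 1 i = cycDist g 1 i') (h₀ : cycDist g 0 i = cycDist g 0 i') : i = i' := by
  simp only [cycDist, Nat.zero_sub, Nat.sub_zero, zero_add] at h₁ h₀; omega

theorem eq_zero_of_cycDist_eq_add_one {g i : ℕ} (hi : i < g)
    (h₁ : cycDist g 1 i = cycDist g 0 i + 1) (h₂ : cycDist g (g - 1) i = cycDist g 0 i + 1) :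
    i = 0 := by
  simp only [cycDist] at h₁ h₂; omega

theorem exists_cycDist_eq_add_one {g i : ℕ} (hg : Even g) (hi : 2 * i ≠ g) (hig : i < g) :
    ∃ p, 0 < p ∧ p < g ∧ cycDist g 0 p = 1 ∧ cycDist g i p = cycDist g 0 i + 1 := by
  obtain ⟨a, rfl⟩ := hg
  rcases Nat.lt_or_gt_of_ne (show i ≠ a by omega) with hia | hia
  · exact ⟨a + a - 1, by omega, by omega, by simp only [cycDist]; omega,
      by simp only [cycDist]; omega⟩
  · exact ⟨1, by omega, by omega, by simp only [cycDist]; omega, by simp only [cycDist]; omega⟩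

namespace SimpleGraph

variable {G : SimpleGraph V} {u v : V}

theorem Reachable.abs_sub_le_dist {f : V → ℤ} (hf : ∀ a b, G.Adj a b → |f a - f b| ≤ 1)
    (h : G.Reachable u v) : |f u - f v| ≤ G.dist u v := by
  suffices ∀ {u v : V} (p : G.Walk u v), |f u - f v| ≤ p.length by
    obtain ⟨p, hp⟩ := h.exists_walk_length_eq_dist
    exact hp ▸ this p
  intro u v p
  induction p with
  | nil => simp
  | cons hadj q ih =>
    calc |f _ - f _| ≤ |f _ - f _| + |f _ - f _| := abs_sub_le _ _ _
      _ ≤ 1 + q.length := add_le_add (hf _ _ hadj) ih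
      _ = _ := by push_cast [Walk.length_cons]; ring

theorem Walk.dist_getVert_le (p : G.Walk u v) {i j : ℕ} (hij : i ≤ j) :
    G.dist (p.getVert i) (p.getVert j) ≤ j - i := by
  have h := dist_le ((p.drop i).take (j - i))
  rw [take_length, drop_getVert, Nat.add_sub_cancel' hij] at h
  exact h.trans (min_le_left _ _)

theorem Walk.idxOf_start_support [DecidableEq V] (p : G.Walk u v) : p.support.idxOf u = 0 := by
  rw [← p.cons_tail_support]
  exact List.idxOf_cons_self

theorem Walk.IsCycle.idxOf_getVert [DecidableEq V] {c : G.Walk u u} (hc : c.IsCycle) {k : ℕ}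
    (hk : k < c.length) : c.support.idxOf (c.getVert k) = k := by
  have hmem := c.getVert_mem_support k
  have hle : c.support.idxOf (c.getVert k) ≤ c.length := by
    have := List.idxOf_lt_length_iff.2 hmem
    rw [c.length_support] at this
    omega
  have heq := c.getVert_support_idxOf hmem
  rcases hle.lt_or_eq with hlt | hlen
  · exact hc.getVert_injOn' (by simp only [Set.mem_ofPred_eq]; omega)
      (by simp only [Set.mem_ofPred_eq]; omega) heq
  · rw [hlen, getVert_length] at heq
    obtain rfl : k = 0 := by have := (hc.getVert_endpoint_iff hk.le).1 heq.symm; omega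
    rw [getVert_zero, idxOf_start_support]

theorem Walk.IsCycle.exists_getVert_eq {c : G.Walk u u} (hc : c.IsCycle) (hv : v ∈ c.support) :
    ∃ k < c.length, c.getVert k = v := by
  obtain ⟨k, rfl, hk⟩ := mem_support_iff_exists_getVert.1 hv
  rcases hk.lt_or_eq with hlt | rfl
  · exact ⟨k, hlt, rfl⟩
  · exact ⟨0, by have := hc.three_le_length; omega, by simp⟩

theorem Walk.IsCycle.card_support_toFinset [DecidableEq V] {c : G.Walk u u} (hc : c.IsCycle) :
    c.support.toFinset.card = c.length := by
  have htail : c.support.toFinset = c.support.tail.toFinset := by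
    rw [← c.cons_tail_support, List.toFinset_cons, List.tail_cons,
      Finset.insert_eq_self.2 (List.mem_toFinset.2 (c.end_mem_tail_support hc.not_nil))]
  rw [htail, List.toFinset_card_of_nodup hc.support_nodup, List.length_tail, c.length_support]
  rfl

theorem Walk.IsCycle.ncard_edgeSet {c : G.Walk u u} (hc : c.IsCycle) :
    c.edgeSet.ncard = c.length := by
  classical
  rw [← c.coe_edges_toFinset, Set.ncard_coe_finset,
    List.toFinset_card_of_nodup hc.isCircuit.isTrail.edges_nodup, c.length_edges]

theorem vdim_eq_of_isVMG [Fintype V] {S : Finset V} (hS : IsVMG G S)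
    (hmin : ∀ T : Finset V, IsVMG G T → S.card ≤ T.card) : vdim G = S.card :=
  le_antisymm (Nat.sInf_le ⟨S, hS, rfl⟩)
    (le_csInf ⟨_, S, hS, rfl⟩ (by rintro _ ⟨T, hT, rfl⟩; exact hmin T hT))

structure IsTwoPetalDaisy (G : SimpleGraph V) (w : V) (c₁ c₂ : G.Walk w w) : Prop where
  isCycle₁ : c₁.IsCycle
  isCycle₂ : c₂.IsCycle
  mem_support : ∀ v, v ∈ c₁.support ∨ v ∈ c₂.support
  mem_edges : ∀ e ∈ G.edgeSet, e ∈ c₁.edges ∨ e ∈ c₂.edges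
  eq_of_mem_support : ∀ v, v ∈ c₁.support → v ∈ c₂.support → v = w

namespace IsTwoPetalDaisy

variable {w : V} {c₁ c₂ : G.Walk w w}

theorem symm (D : IsTwoPetalDaisy G w c₁ c₂) : IsTwoPetalDaisy G w c₂ c₁ where
  isCycle₁ := D.isCycle₂
  isCycle₂ := D.isCycle₁
  mem_support v := (D.mem_support v).symm
  mem_edges e he := (D.mem_edges e he).symm
  eq_of_mem_support v h₂ h₁ := D.eq_of_mem_support v h₁ h₂

theorem connected (D : IsTwoPetalDaisy G w c₁ c₂) : G.Connected := by
  classical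
  have : Nonempty V := ⟨w⟩
  have hw : ∀ v, G.Reachable w v := fun v =>
    (D.mem_support v).elim (fun h => ⟨c₁.takeUntil v h⟩) (fun h => ⟨c₂.takeUntil v h⟩)
  exact ⟨fun u v => (hw u).symm.trans (hw v)⟩

theorem exists_getVert_eq (D : IsTwoPetalDaisy G w c₁ c₂) (v : V) :
    (∃ i < c₁.length, c₁.getVert i = v) ∨ ∃ j < c₂.length, c₂.getVert j = v :=
  (D.mem_support v).imp D.isCycle₁.exists_getVert_eq D.isCycle₂.exists_getVert_eq

theorem getVert_ne_getVert (D : IsTwoPetalDaisy G w c₁ c₂) {i : ℕ} (hi₀ : 0 < i)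
    (hi : i < c₁.length) (j : ℕ) : c₁.getVert i ≠ c₂.getVert j := by
  intro h
  have hw := D.eq_of_mem_support _ (c₁.getVert_mem_support i) (h ▸ c₂.getVert_mem_support j)
  have := (D.isCycle₁.getVert_endpoint_iff hi.le).1 hw
  omega

theorem exists_getVert_of_adj (D : IsTwoPetalDaisy G w c₁ c₂) {a b : V} (hab : G.Adj a b) :
    (∃ k < c₁.length, s(c₁.getVert k, c₁.getVert (k + 1)) = s(a, b)) ∨
      ∃ k < c₂.length, s(c₂.getVert k, c₂.getVert (k + 1)) = s(a, b) :=
  (D.mem_edges _ hab).imp c₁.mk_mem_edges_iff_exists.1 c₂.mk_mem_edges_iff_exists.1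

theorem exists_potential (D : IsTwoPetalDaisy G w c₁ c₂) (φ₁ φ₂ : ℕ → ℤ)
    (h₁ : ∀ k < c₁.length, |φ₁ k - φ₁ (k + 1)| ≤ 1) (h₂ : ∀ k < c₂.length, |φ₂ k - φ₂ (k + 1)| ≤ 1)
    (h₁w : φ₁ c₁.length = φ₁ 0) (h₂w : φ₂ c₂.length = φ₂ 0) (hw : φ₁ 0 = φ₂ 0) :
    ∃ f : V → ℤ, (∀ k ≤ c₁.length, f (c₁.getVert k) = φ₁ k) ∧
      (∀ k ≤ c₂.length, f (c₂.getVert k) = φ₂ k) ∧ ∀ u v, |f u - f v| ≤ G.dist u v := by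
  classical
  let f : V → ℤ := fun v =>
    if v ∈ c₁.support then φ₁ (c₁.support.idxOf v) else φ₂ (c₂.support.idxOf v)
  have hf₁ : ∀ k ≤ c₁.length, f (c₁.getVert k) = φ₁ k := by
    intro k hk
    simp only [f, if_pos (c₁.getVert_mem_support k)]
    rcases hk.lt_or_eq with hk | rfl
    · rw [D.isCycle₁.idxOf_getVert hk]
    · rw [Walk.getVert_length, Walk.idxOf_start_support, h₁w]
  have hf₂ : ∀ k ≤ c₂.length, f (c₂.getVert k) = φ₂ k := by
    intro k hk
    have hend := D.isCycle₂.getVert_endpoint_iff hk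
    by_cases hmem : c₂.getVert k ∈ c₁.support
    · have hkw := D.eq_of_mem_support _ hmem (c₂.getVert_mem_support k)
      have hfw := hf₁ 0 (Nat.zero_le _)
      rw [Walk.getVert_zero] at hfw
      rw [hkw, hfw, hw]
      rcases hend.1 hkw with rfl | rfl
      · rfl
      · exact h₂w.symm
    · simp only [f, if_neg hmem]
      rcases hk.lt_or_eq with hk | rfl
      · rw [D.isCycle₂.idxOf_getVert hk]
      · exact (hmem (by simp)).elim
  refine ⟨f, hf₁, hf₂, fun u v => D.connected.preconnected u v |>.abs_sub_le_dist ?_⟩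
  intro a b hab
  rcases D.exists_getVert_of_adj hab with ⟨k, hk, he⟩ | ⟨k, hk, he⟩ <;>
    rcases Sym2.eq_iff.1 he with ⟨rfl, rfl⟩ | ⟨rfl, rfl⟩
  · rw [hf₁ k hk.le, hf₁ (k + 1) hk]; exact h₁ k hk
  · rw [hf₁ k hk.le, hf₁ (k + 1) hk, abs_sub_comm]; exact h₁ k hk
  · rw [hf₂ k hk.le, hf₂ (k + 1) hk]; exact h₂ k hk
  · rw [hf₂ k hk.le, hf₂ (k + 1) hk, abs_sub_comm]; exact h₂ k hk

theorem dist_getVert₁ (D : IsTwoPetalDaisy G w c₁ c₂) {i j : ℕ} (hi : i ≤ c₁.length)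
    (hj : j ≤ c₁.length) : G.dist (c₁.getVert i) (c₁.getVert j) = cycDist c₁.length i j := by
  obtain ⟨f, hf₁, -, hf⟩ := D.exists_potential (fun k => cycDist c₁.length i k)
    (fun _ => cycDist c₁.length i 0) (fun k _ => by rw [abs_le]; simp only [cycDist]; omega)
    (fun _ _ => by simp) (by simp only [cycDist]; omega) rfl rfl
  have hlow := abs_le.1 (hf (c₁.getVert i) (c₁.getVert j))
  rw [hf₁ i hi, hf₁ j hj] at hlow
  have hup : ∀ i j, i ≤ j → j ≤ c₁.length →
      G.dist (c₁.getVert i) (c₁.getVert j) ≤ min (j - i) (c₁.length - j + i) := by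
    intro i j hij hj
    have hw := D.connected.dist_triangle (u := c₁.getVert i) (v := w) (w := c₁.getVert j)
    have hiw := c₁.dist_getVert_le (Nat.zero_le i)
    have hjw := c₁.dist_getVert_le hj
    rw [Walk.getVert_zero, dist_comm] at hiw
    rw [Walk.getVert_length, dist_comm] at hjw
    have := c₁.dist_getVert_le hij
    omega
  rcases le_total i j with hij | hji
  · have := hup i j hij hj
    simp only [cycDist] at *
    omega
  · have := hup j i hji hi
    rw [dist_comm] at this
    simp only [cycDist] at *
    omega

theorem dist_getVert₁₂ (D : IsTwoPetalDaisy G w c₁ c₂) {i j : ℕ} (hi : i ≤ c₁.length)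
    (hj : j ≤ c₂.length) :
    G.dist (c₁.getVert i) (c₂.getVert j) = cycDist c₁.length 0 i + cycDist c₂.length 0 j := by
  obtain ⟨f, hf₁, hf₂, hf⟩ := D.exists_potential (fun k => cycDist c₁.length 0 k)
    (fun k => -cycDist c₂.length 0 k) (fun k _ => by rw [abs_le]; simp only [cycDist]; omega)
    (fun k _ => by rw [abs_le]; simp only [cycDist]; omega) (by simp [cycDist])
    (by simp [cycDist]) (by simp [cycDist])
  have hlow := hf (c₁.getVert i) (c₂.getVert j)
  rw [hf₁ i hi, hf₂ j hj, sub_neg_eq_add, abs_of_nonneg (by positivity)] at hlow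
  have hup := D.connected.dist_triangle (u := c₁.getVert i) (v := w) (w := c₂.getVert j)
  have hiw := D.dist_getVert₁ hi (Nat.zero_le _)
  have hwj := D.symm.dist_getVert₁ (Nat.zero_le _) hj
  rw [Walk.getVert_zero] at hiw hwj
  simp only [cycDist] at *
  omega

theorem dist_getVert₂₁ (D : IsTwoPetalDaisy G w c₁ c₂) {i j : ℕ} (hi : i ≤ c₁.length)
    (hj : j ≤ c₂.length) :
    G.dist (c₂.getVert j) (c₁.getVert i) = cycDist c₁.length 0 i + cycDist c₂.length 0 j := by
  rw [dist_comm, D.dist_getVert₁₂ hi hj]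



theorem getVert_eq_of_dist_eq (D : IsTwoPetalDaisy G w c₁ c₂) {i j : ℕ} (hi : i < c₁.length)
    (hj : j < c₂.length)
    (h : ∀ s ∈ ({c₁.snd, c₁.penultimate, c₂.snd} : Set V),
      G.dist s (c₁.getVert i) = G.dist s (c₂.getVert j)) :
    c₁.getVert i = c₂.getVert j := by
  have h₁ := D.isCycle₁.three_le_length
  have h₂ := D.isCycle₂.three_le_length
  simp only [Set.mem_insert_iff, Set.mem_singleton_iff, forall_eq_or_imp, forall_eq] at h
  obtain ⟨e₁, e₂, e₃⟩ := h
  rw [D.dist_getVert₁ (by omega) hi.le, D.dist_getVert₁₂ (by omega) hj.le,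
    cycDist_zero_one (by omega)] at e₁
  rw [D.dist_getVert₁ (by omega) hi.le, D.dist_getVert₁₂ (by omega) hj.le,
    cycDist_zero_sub_one (by omega)] at e₂
  rw [D.dist_getVert₂₁ hi.le (by omega), D.symm.dist_getVert₁ (by omega) hj.le,
    cycDist_zero_one (by omega)] at e₃
  have hρ : cycDist c₁.length 0 i = cycDist c₂.length 0 j := by
    have := cycDist_one_le_add_one c₁.length i
    have := cycDist_one_le_add_one c₂.length j
    omega
  obtain rfl := eq_zero_of_cycDist_eq_add_one hi (by omega) (by omega)
  obtain rfl : j = 0 := by simp only [cycDist] at hρ; omega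
  simp

theorem isVMG_triple (D : IsTwoPetalDaisy G w c₁ c₂) :
    IsVMG G {c₁.snd, c₁.penultimate, c₂.snd} := by
  have h₁ := D.isCycle₁.three_le_length
  have h₂ := D.isCycle₂.three_le_length
  intro x x' hne
  by_contra! hsame
  apply hne
  rcases D.exists_getVert_eq x with ⟨i, hi, rfl⟩ | ⟨j, hj, rfl⟩ <;>
    rcases D.exists_getVert_eq x' with ⟨i', hi', rfl⟩ | ⟨j', hj', rfl⟩
  · have e₁ := hsame c₁.snd (by simp)
    have e₃ := hsame c₂.snd (by simp)
    rw [D.dist_getVert₁ (by omega) hi.le, D.dist_getVert₁ (by omega) hi'.le] at e₁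
    rw [D.dist_getVert₂₁ hi.le (by omega), D.dist_getVert₂₁ hi'.le (by omega)] at e₃
    rw [eq_of_cycDist_eq hi hi' e₁ (by omega)]
  · exact D.getVert_eq_of_dist_eq hi hj' hsame
  · exact (D.getVert_eq_of_dist_eq hi' hj fun s hs => (hsame s hs).symm).symm
  · have e₁ := hsame c₁.snd (by simp)
    have e₃ := hsame c₂.snd (by simp)
    rw [D.dist_getVert₁₂ (by omega) hj.le, D.dist_getVert₁₂ (by omega) hj'.le] at e₁
    rw [D.symm.dist_getVert₁ (by omega) hj.le, D.symm.dist_getVert₁ (by omega) hj'.le] at e₃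
    rw [eq_of_cycDist_eq hj hj' e₃ (by omega)]

theorem not_isVMG_of_subset_support (D : IsTwoPetalDaisy G w c₁ c₂) {S : Set V}
    (hS : ∀ s ∈ S, s ∈ c₁.support) : ¬IsVMG G S := by
  have h₂ := D.isCycle₂.three_le_length
  intro hgen
  obtain ⟨s, hs, hne⟩ := hgen _ _ D.isCycle₂.snd_ne_penultimate
  obtain ⟨i, hi, rfl⟩ := D.isCycle₁.exists_getVert_eq (hS s hs)
  rw [D.dist_getVert₁₂ hi.le (by omega), D.dist_getVert₁₂ hi.le (by omega)] at hne
  simp only [cycDist] at hne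
  omega

theorem not_isVMG_pair_of_antipodal (D : IsTwoPetalDaisy G w c₁ c₂) {i j : ℕ}
    (hi : c₁.length = 2 * i) (hj : j ≤ c₂.length) : ¬IsVMG G {c₁.getVert i, c₂.getVert j} := by
  have h₁ := D.isCycle₁.three_le_length
  intro hgen
  obtain ⟨s, hs, hne⟩ :=
    hgen _ _ (D.isCycle₁.getVert_sub_one_ne_getVert_add_one (i := i) (by omega))
  rcases hs with rfl | rfl
  · rw [D.dist_getVert₁ (by omega) (by omega), D.dist_getVert₁ (by omega) (by omega)] at hne
    simp only [cycDist] at hne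
    omega
  · rw [D.dist_getVert₂₁ (by omega) hj, D.dist_getVert₂₁ (by omega) hj] at hne
    simp only [cycDist] at hne
    omega

theorem not_isVMG_pair (D : IsTwoPetalDaisy G w c₁ c₂) (he₁ : Even c₁.length)
    (he₂ : Even c₂.length) {i j : ℕ} (hi : i < c₁.length) (hj : j < c₂.length) :
    ¬IsVMG G {c₁.getVert i, c₂.getVert j} := by
  by_cases hia : 2 * i = c₁.length
  · exact D.not_isVMG_pair_of_antipodal hia.symm hj.le
  by_cases hjb : 2 * j = c₂.length
  · rw [Set.pair_comm]
    exact D.symm.not_isVMG_pair_of_antipodal hjb.symm hi.le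
  obtain ⟨p, hp₀, hp, hpw, hip⟩ :=
    exists_cycDist_eq_add_one he₁ hia hi
  obtain ⟨q, -, hq, hqw, hjq⟩ :=
    exists_cycDist_eq_add_one he₂ hjb hj
  intro hgen
  obtain ⟨s, hs, hne⟩ := hgen _ _ (D.getVert_ne_getVert hp₀ hp q)
  rcases hs with rfl | rfl
  · rw [D.dist_getVert₁ hi.le hp.le, D.dist_getVert₁₂ hi.le hq.le] at hne
    omega
  · rw [D.dist_getVert₂₁ hp.le hj.le, D.symm.dist_getVert₁ hj.le hq.le] at hne
    omega

theorem three_le_card_of_isVMG (D : IsTwoPetalDaisy G w c₁ c₂) (he₁ : Even c₁.length)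
    (he₂ : Even c₂.length) {S : Finset V} (hS : IsVMG G S) : 3 ≤ S.card := by
  classical
  by_contra! hcard
  by_cases h₁ : ∀ s ∈ S, s ∈ c₁.support
  · exact D.not_isVMG_of_subset_support h₁ hS
  by_cases h₂ : ∀ s ∈ S, s ∈ c₂.support
  · exact D.symm.not_isVMG_of_subset_support h₂ hS
  push Not at h₁ h₂
  obtain ⟨x, hxS, hx⟩ := h₂
  obtain ⟨y, hyS, hy⟩ := h₁
  obtain ⟨i, hi, rfl⟩ := (D.exists_getVert_eq x).resolve_right
    (by rintro ⟨j, -, rfl⟩; exact hx (c₂.getVert_mem_support j))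
  obtain ⟨j, hj, rfl⟩ := (D.exists_getVert_eq y).resolve_left
    (by rintro ⟨i, -, rfl⟩; exact hy (c₁.getVert_mem_support i))
  have hi₀ : 0 < i := Nat.pos_of_ne_zero (by rintro rfl; exact hx (by simp))
  have hpair : ({c₁.getVert i, c₂.getVert j} : Finset V) = S :=
    Finset.eq_of_subset_of_card_le (Finset.insert_subset hxS (Finset.singleton_subset_iff.2 hyS))
      (by rw [Finset.card_pair (D.getVert_ne_getVert hi₀ hi j)]; omega)
  rw [← hpair, Finset.coe_pair] at hS
  exact D.not_isVMG_pair he₁ he₂ hi hj hS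

theorem vdim_eq_three [Fintype V] (D : IsTwoPetalDaisy G w c₁ c₂) (he₁ : Even c₁.length)
    (he₂ : Even c₂.length) : vdim G = 3 := by
  classical
  have h₁ := D.isCycle₁.three_le_length
  have hcard : ({c₁.snd, c₁.penultimate, c₂.snd} : Finset V).card = 3 :=
    Finset.card_eq_three.2 ⟨_, _, _, D.isCycle₁.snd_ne_penultimate,
      D.getVert_ne_getVert one_pos (by omega) 1,
      D.getVert_ne_getVert (by omega) (by omega) 1, rfl⟩
  rw [← hcard]
  exact vdim_eq_of_isVMG (by simpa using D.isVMG_triple)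
    fun T hT => hcard ▸ D.three_le_card_of_isVMG he₁ he₂ hT

theorem ncard_edgeSet (D : IsTwoPetalDaisy G w c₁ c₂) :
    G.edgeSet.ncard = c₁.length + c₂.length := by
  have hunion : G.edgeSet = c₁.edgeSet ∪ c₂.edgeSet := by
    ext e
    exact ⟨D.mem_edges e, by rintro (h | h) <;> exact Walk.edges_subset_edgeSet _ h⟩
  have hdisj : Disjoint c₁.edgeSet c₂.edgeSet := by
    rw [Set.disjoint_left]
    rintro ⟨a, b⟩ h₁ h₂
    have ha := D.eq_of_mem_support a (c₁.fst_mem_support_of_mem_edges h₁)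
      (c₂.fst_mem_support_of_mem_edges h₂)
    have hb := D.eq_of_mem_support b (c₁.snd_mem_support_of_mem_edges h₁)
      (c₂.snd_mem_support_of_mem_edges h₂)
    subst ha hb
    exact (c₁.adj_of_mem_edges h₁).ne rfl
  rw [hunion, Set.ncard_union_eq hdisj c₁.edges.finite_toSet c₂.edges.finite_toSet,
    D.isCycle₁.ncard_edgeSet, D.isCycle₂.ncard_edgeSet]

theorem card_add_one [Fintype V] (D : IsTwoPetalDaisy G w c₁ c₂) :
    Fintype.card V + 1 = c₁.length + c₂.length := by
  classical
  have huniv : Finset.univ = c₁.support.toFinset ∪ c₂.support.toFinset := by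
    ext v
    simpa using D.mem_support v
  have hinter : c₁.support.toFinset ∩ c₂.support.toFinset = {w} := by
    ext v
    simp only [Finset.mem_inter, List.mem_toFinset, Finset.mem_singleton]
    exact ⟨fun h => D.eq_of_mem_support v h.1 h.2, by rintro rfl; simp⟩
  have := Finset.card_union_add_card_inter c₁.support.toFinset c₂.support.toFinset
  rwa [← huniv, hinter, Finset.card_univ, Finset.card_singleton,
    D.isCycle₁.card_support_toFinset, D.isCycle₂.card_support_toFinset] at this

end IsTwoPetalDaisy

end SimpleGraph

theorem stmt16_general [Fintype V] (G : SimpleGraph V) (w : V) (g₁ g₂ : ℕ)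
    (he₁ : Even g₁) (he₂ : Even g₂)
    (c₁ c₂ : G.Walk w w) (hc₁ : c₁.IsCycle) (hc₂ : c₂.IsCycle)
    (hl₁ : c₁.length = g₁) (hl₂ : c₂.length = g₂)
    (hvert : ∀ v : V, v ∈ c₁.support ∨ v ∈ c₂.support)
    (hedge : ∀ e ∈ G.edgeSet, e ∈ c₁.edges ∨ e ∈ c₂.edges)
    (hshare : ∀ v : V, v ∈ c₁.support → v ∈ c₂.support → v = w) :
    vdim G = 3 ∧
      (3 : ℤ) = 2 * ((G.edgeSet.ncard : ℤ) - (Fintype.card V : ℤ) + 1) - 1 := by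
  subst hl₁ hl₂
  have D : G.IsTwoPetalDaisy w c₁ c₂ := ⟨hc₁, hc₂, hvert, hedge, hshare⟩
  refine ⟨D.vdim_eq_three he₁ he₂, ?_⟩
  have hE := D.ncard_edgeSet
  have hV := D.card_add_one
  omega

/-- A daisy graph with two even petals of lengths `g₁, g₂ ≥ 4` (two cycles
sharing exactly the vertex `w`, together covering all vertices and edges of
`G`) has vertex metric dimension `3 = 2c(G) - 1`. -/
theorem stmt16 [Fintype V] (G : SimpleGraph V) (w : V) (g₁ g₂ : ℕ)
    (hg₁ : 4 ≤ g₁) (hg₂ : 4 ≤ g₂) (he₁ : Even g₁) (he₂ : Even g₂)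
    (c₁ c₂ : G.Walk w w) (hc₁ : c₁.IsCycle) (hc₂ : c₂.IsCycle)
    (hl₁ : c₁.length = g₁) (hl₂ : c₂.length = g₂)
    (hvert : ∀ v : V, v ∈ c₁.support ∨ v ∈ c₂.support)
    (hedge : ∀ e ∈ G.edgeSet, e ∈ c₁.edges ∨ e ∈ c₂.edges)
    (hshare : ∀ v : V, v ∈ c₁.support → v ∈ c₂.support → v = w) :
    vdim G = 3 ∧
      (3 : ℤ) = 2 * ((G.edgeSet.ncard : ℤ) - (Fintype.card V : ℤ) + 1) - 1 :=
  stmt16_general G w g₁ g₂ he₁ he₂ c₁ c₂ hc₁ hc₂ hl₁ hl₂ hvert hedge hshare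
end

section
/- Let G be the one-point union of two triangles (two cycles of length 3 sharing exactly one vertex). Then the edge metric dimension of G equals 3 = 2c(G) - 1, while the vertex metric dimension of G equals 2 < 2c(G) - 1. -/
open SimpleGraph

variable {V : Type*}

lemma tri17 (G : SimpleGraph V) (w : V) (c : G.Walk w w) (hc : c.IsCycle)
    (hl : c.length = 3) : ∃ a b : V, G.Adj w a ∧ G.Adj a b ∧ G.Adj b w ∧
      a ≠ b ∧ a ≠ w ∧ b ≠ w ∧ c.support = [w, a, b, w] ∧
      c.edges = [s(w, a), s(a, b), s(b, w)] := by
  cases c with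
  | nil => simp at hl
  | cons h p =>
    cases p with
    | nil => simp at hl
    | cons h2 q =>
      cases q with
      | nil => simp at hl
      | cons h3 r =>
        cases r with
        | nil =>
          rename_i a b
          have hsup := hc.support_nodup
          simp [Walk.support_cons, List.nodup_cons] at hsup
          exact ⟨a, b, h, h2, h3, hsup.1.1, hsup.1.2, hsup.2, by simp, by simp⟩
        | cons h4 s => simp [Walk.length_cons] at hl

lemma dist2 (G : SimpleGraph V) {x y z : V} (h1 : G.Adj x z) (h2 : G.Adj z y)
    (hne : x ≠ y) (hna : ¬ G.Adj x y) : G.dist x y = 2 := by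
  have hle : G.dist x y ≤ 2 := by
    simpa using G.dist_le (Walk.cons h1 (Walk.cons h2 Walk.nil))
  have hr : G.Reachable x y := ⟨Walk.cons h1 (Walk.cons h2 Walk.nil)⟩
  have h0 : G.dist x y ≠ 0 := fun h => hne (hr.dist_eq_zero_iff.mp h)
  have h1' : G.dist x y ≠ 1 := fun h => hna (SimpleGraph.dist_eq_one_iff_adj (G := G).mp h)
  omega

lemma sym2ne17 {x y u v : V} (h1 : x ≠ u ∨ y ≠ v) (h2 : x ≠ v ∨ y ≠ u) :
    s(x, y) ≠ s(u, v) := by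
  intro h; rw [Sym2.eq_iff] at h; tauto

set_option maxHeartbeats 2000000 in
/-- For the bowtie graph (two triangles sharing exactly the vertex `w`,
covering all vertices and edges of `G`), `edim(G) = 3 = 2c(G) - 1` while
`dim(G) = 2 < 2c(G) - 1`. -/
theorem stmt17 [Fintype V] (G : SimpleGraph V) (w : V)
    (c₁ c₂ : G.Walk w w) (hc₁ : c₁.IsCycle) (hc₂ : c₂.IsCycle)
    (hl₁ : c₁.length = 3) (hl₂ : c₂.length = 3)
    (hvert : ∀ v : V, v ∈ c₁.support ∨ v ∈ c₂.support)
    (hedge : ∀ e ∈ G.edgeSet, e ∈ c₁.edges ∨ e ∈ c₂.edges)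
    (hshare : ∀ v : V, v ∈ c₁.support → v ∈ c₂.support → v = w) :
    edim G = 3 ∧ vdim G = 2 ∧
      (3 : ℤ) = 2 * ((G.edgeSet.ncard : ℤ) - (Fintype.card V : ℤ) + 1) - 1 ∧
      (2 : ℤ) < 2 * ((G.edgeSet.ncard : ℤ) - (Fintype.card V : ℤ) + 1) - 1 := by
  classical
  obtain ⟨a, b, hwa, hab, hbw, nab, naw, nbw, hs1, he1⟩ := tri17 G w c₁ hc₁ hl₁
  obtain ⟨c, d, hwc, hcd, hdw, ncd, ncw, ndw, hs2, he2⟩ := tri17 G w c₂ hc₂ hl₂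
  -- cross distinctness
  have hmem1 : ∀ v : V, v ∈ c₁.support ↔ (v = w ∨ v = a ∨ v = b) := by
    intro v; rw [hs1]; simp; tauto
  have hmem2 : ∀ v : V, v ∈ c₂.support ↔ (v = w ∨ v = c ∨ v = d) := by
    intro v; rw [hs2]; simp; tauto
  have nac : a ≠ c := fun h => naw (hshare a ((hmem1 a).mpr (by tauto))
    ((hmem2 a).mpr (by tauto)))
  have nad : a ≠ d := fun h => naw (hshare a ((hmem1 a).mpr (by tauto))
    ((hmem2 a).mpr (by tauto)))
  have nbc : b ≠ c := fun h => nbw (hshare b ((hmem1 b).mpr (by tauto))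
    ((hmem2 b).mpr (by tauto)))
  have nbd : b ≠ d := fun h => nbw (hshare b ((hmem1 b).mpr (by tauto))
    ((hmem2 b).mpr (by tauto)))
  have nwa : w ≠ a := naw.symm
  have nwb : w ≠ b := nbw.symm
  have nwc : w ≠ c := ncw.symm
  have nwd : w ≠ d := ndw.symm
  have nba : b ≠ a := nab.symm
  have nca : c ≠ a := nac.symm
  have nda : d ≠ a := nad.symm
  have ncb : c ≠ b := nbc.symm
  have ndb : d ≠ b := nbd.symm
  have ndc : d ≠ c := ncd.symm
  -- vertex classification
  have hv : ∀ v : V, v = w ∨ v = a ∨ v = b ∨ v = c ∨ v = d := by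
    intro v
    rcases hvert v with h | h
    · rcases (hmem1 v).mp h with h | h | h <;> tauto
    · rcases (hmem2 v).mp h with h | h | h <;> tauto
  -- edge classification
  have hEc : ∀ e ∈ G.edgeSet, e = s(w, a) ∨ e = s(a, b) ∨ e = s(b, w) ∨
      e = s(w, c) ∨ e = s(c, d) ∨ e = s(d, w) := by
    intro e he
    rcases hedge e he with h | h
    · rw [he1] at h; simp at h; tauto
    · rw [he2] at h; simp at h; tauto
  -- non-adjacencies
  have hnac : ¬ G.Adj a c := by
    intro h
    rcases hEc s(a, c) (G.mem_edgeSet.mpr h) with h' | h' | h' | h' | h' | h' <;>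
      rw [Sym2.eq_iff] at h' <;> tauto
  have hnad : ¬ G.Adj a d := by
    intro h
    rcases hEc s(a, d) (G.mem_edgeSet.mpr h) with h' | h' | h' | h' | h' | h' <;>
      rw [Sym2.eq_iff] at h' <;> tauto
  have hnbc : ¬ G.Adj b c := by
    intro h
    rcases hEc s(b, c) (G.mem_edgeSet.mpr h) with h' | h' | h' | h' | h' | h' <;>
      rw [Sym2.eq_iff] at h' <;> tauto
  have hnbd : ¬ G.Adj b d := by
    intro h
    rcases hEc s(b, d) (G.mem_edgeSet.mpr h) with h' | h' | h' | h' | h' | h' <;>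
      rw [Sym2.eq_iff] at h' <;> tauto
  -- distance matrix
  have Dww : G.dist w w = 0 := SimpleGraph.dist_self
  have Daa : G.dist a a = 0 := SimpleGraph.dist_self
  have Dbb : G.dist b b = 0 := SimpleGraph.dist_self
  have Dcc : G.dist c c = 0 := SimpleGraph.dist_self
  have Ddd : G.dist d d = 0 := SimpleGraph.dist_self
  have Dwa : G.dist w a = 1 := SimpleGraph.dist_eq_one_iff_adj (G := G).mpr hwa
  have Dwb : G.dist w b = 1 := SimpleGraph.dist_eq_one_iff_adj (G := G).mpr hbw.symm
  have Dwc : G.dist w c = 1 := SimpleGraph.dist_eq_one_iff_adj (G := G).mpr hwc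
  have Dwd : G.dist w d = 1 := SimpleGraph.dist_eq_one_iff_adj (G := G).mpr hdw.symm
  have Daw : G.dist a w = 1 := SimpleGraph.dist_eq_one_iff_adj (G := G).mpr hwa.symm
  have Dbw : G.dist b w = 1 := SimpleGraph.dist_eq_one_iff_adj (G := G).mpr hbw
  have Dcw : G.dist c w = 1 := SimpleGraph.dist_eq_one_iff_adj (G := G).mpr hwc.symm
  have Ddw : G.dist d w = 1 := SimpleGraph.dist_eq_one_iff_adj (G := G).mpr hdw
  have Dab : G.dist a b = 1 := SimpleGraph.dist_eq_one_iff_adj (G := G).mpr hab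
  have Dba : G.dist b a = 1 := SimpleGraph.dist_eq_one_iff_adj (G := G).mpr hab.symm
  have Dcd : G.dist c d = 1 := SimpleGraph.dist_eq_one_iff_adj (G := G).mpr hcd
  have Ddc : G.dist d c = 1 := SimpleGraph.dist_eq_one_iff_adj (G := G).mpr hcd.symm
  have Dac : G.dist a c = 2 := dist2 G hwa.symm hwc nac hnac
  have Dad : G.dist a d = 2 := dist2 G hwa.symm hdw.symm nad hnad
  have Dbc : G.dist b c = 2 := dist2 G hbw hwc nbc hnbc
  have Dbd : G.dist b d = 2 := dist2 G hbw hdw.symm nbd hnbd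
  have Dca : G.dist c a = 2 := by rw [SimpleGraph.dist_comm]; exact Dac
  have Dda : G.dist d a = 2 := by rw [SimpleGraph.dist_comm]; exact Dad
  have Dcb : G.dist c b = 2 := by rw [SimpleGraph.dist_comm]; exact Dbc
  have Ddb : G.dist d b = 2 := by rw [SimpleGraph.dist_comm]; exact Dbd
  -- eDist unfolding
  have hE : ∀ s x y : V, eDist G s s(x, y) = min (G.dist s x) (G.dist s y) := by
    intro s x y; simp [eDist]
  -- edge memberships
  have m1 : s(w, a) ∈ G.edgeSet := G.mem_edgeSet.mpr hwa
  have m2 : s(a, b) ∈ G.edgeSet := G.mem_edgeSet.mpr hab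
  have m3 : s(b, w) ∈ G.edgeSet := G.mem_edgeSet.mpr hbw
  have m4 : s(w, c) ∈ G.edgeSet := G.mem_edgeSet.mpr hwc
  have m5 : s(c, d) ∈ G.edgeSet := G.mem_edgeSet.mpr hcd
  have m6 : s(d, w) ∈ G.edgeSet := G.mem_edgeSet.mpr hdw
  -- edim upper bound: {a, b, c} is an edge metric generator
  have hEMG : IsEMG G ↑({a, b, c} : Finset V) := by
    intro e he e' he' hne
    rcases hEc e he with rfl | rfl | rfl | rfl | rfl | rfl <;>
      rcases hEc e' he' with rfl | rfl | rfl | rfl | rfl | rfl <;>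
      first
        | exact absurd rfl hne
        | (refine ⟨a, by simp, ?_⟩; simp only [hE, Dww, Daa, Dbb, Dcc, Ddd, Dwa, Dwb, Dwc, Dwd, Daw, Dbw, Dcw, Ddw, Dab, Dba, Dcd, Ddc, Dac, Dad, Dbc, Dbd, Dca, Dda, Dcb, Ddb] <;> decide)
        | (refine ⟨b, by simp, ?_⟩; simp only [hE, Dww, Daa, Dbb, Dcc, Ddd, Dwa, Dwb, Dwc, Dwd, Daw, Dbw, Dcw, Ddw, Dab, Dba, Dcd, Ddc, Dac, Dad, Dbc, Dbd, Dca, Dda, Dcb, Ddb] <;> decide)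
        | (refine ⟨c, by simp, ?_⟩; simp only [hE, Dww, Daa, Dbb, Dcc, Ddd, Dwa, Dwb, Dwc, Dwd, Daw, Dbw, Dcw, Ddw, Dab, Dba, Dcd, Ddc, Dac, Dad, Dbc, Dbd, Dca, Dda, Dcb, Ddb] <;> decide)
  have cardabc : ({a, b, c} : Finset V).card = 3 := by
    rw [Finset.card_insert_of_notMem (by simp [nab, nac]),
      Finset.card_insert_of_notMem (by simp [nbc]), Finset.card_singleton]
  -- edim lower bound
  have pairFail : ∀ s t : V, ∃ e e', e ∈ G.edgeSet ∧ e' ∈ G.edgeSet ∧ e ≠ e' ∧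
      eDist G s e = eDist G s e' ∧ eDist G t e = eDist G t e' := by
    intro s t
    rcases hv s with h | h | h | h | h <;>
      rcases hv t with h' | h' | h' | h' | h' <;>
      rw [h, h'] <;>
      first
        | (refine ⟨s(w, c), s(d, w), m4, m6, sym2ne17 (Or.inl nwd) (Or.inr ncd), ?_, ?_⟩ <;> (simp only [hE, Dww, Daa, Dbb, Dcc, Ddd, Dwa, Dwb, Dwc, Dwd, Daw, Dbw, Dcw, Ddw, Dab, Dba, Dcd, Ddc, Dac, Dad, Dbc, Dbd, Dca, Dda, Dcb, Ddb] <;> decide))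
        | (refine ⟨s(w, a), s(b, w), m1, m3, sym2ne17 (Or.inl nwb) (Or.inr nab), ?_, ?_⟩ <;> (simp only [hE, Dww, Daa, Dbb, Dcc, Ddd, Dwa, Dwb, Dwc, Dwd, Daw, Dbw, Dcw, Ddw, Dab, Dba, Dcd, Ddc, Dac, Dad, Dbc, Dbd, Dca, Dda, Dcb, Ddb] <;> decide))
        | (refine ⟨s(b, w), s(d, w), m3, m6, sym2ne17 (Or.inl nbd) (Or.inl nbw), ?_, ?_⟩ <;> (simp only [hE, Dww, Daa, Dbb, Dcc, Ddd, Dwa, Dwb, Dwc, Dwd, Daw, Dbw, Dcw, Ddw, Dab, Dba, Dcd, Ddc, Dac, Dad, Dbc, Dbd, Dca, Dda, Dcb, Ddb] <;> decide))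
        | (refine ⟨s(b, w), s(w, c), m3, m4, sym2ne17 (Or.inl nbw) (Or.inl nbc), ?_, ?_⟩ <;> (simp only [hE, Dww, Daa, Dbb, Dcc, Ddd, Dwa, Dwb, Dwc, Dwd, Daw, Dbw, Dcw, Ddw, Dab, Dba, Dcd, Ddc, Dac, Dad, Dbc, Dbd, Dca, Dda, Dcb, Ddb] <;> decide))
        | (refine ⟨s(w, a), s(d, w), m1, m6, sym2ne17 (Or.inl nwd) (Or.inr nad), ?_, ?_⟩ <;> (simp only [hE, Dww, Daa, Dbb, Dcc, Ddd, Dwa, Dwb, Dwc, Dwd, Daw, Dbw, Dcw, Ddw, Dab, Dba, Dcd, Ddc, Dac, Dad, Dbc, Dbd, Dca, Dda, Dcb, Ddb] <;> decide))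
        | (refine ⟨s(w, a), s(w, c), m1, m4, sym2ne17 (Or.inr nac) (Or.inl nwc), ?_, ?_⟩ <;> (simp only [hE, Dww, Daa, Dbb, Dcc, Ddd, Dwa, Dwb, Dwc, Dwd, Daw, Dbw, Dcw, Ddw, Dab, Dba, Dcd, Ddc, Dac, Dad, Dbc, Dbd, Dca, Dda, Dcb, Ddb] <;> decide))
  have hedim : edim G = 3 := by
    have hmem3 : 3 ∈ {n | ∃ S : Finset V, IsEMG G ↑S ∧ S.card = n} :=
      ⟨({a, b, c} : Finset V), hEMG, cardabc⟩
    unfold edim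
    apply le_antisymm
    · exact Nat.sInf_le hmem3
    · apply le_csInf ⟨3, hmem3⟩
      rintro n ⟨S, hS, rfl⟩
      by_contra hlt
      push_neg at hlt
      have hS2 : S.card ≤ 2 := by omega
      obtain ⟨s, t, hst⟩ : ∃ s t : V, ∀ x ∈ S, x = s ∨ x = t := by
        rcases S.eq_empty_or_nonempty with rfl | ⟨s, hs⟩
        · exact ⟨w, w, by simp⟩
        · rcases (S.erase s).eq_empty_or_nonempty with he | ⟨t, ht⟩
          · refine ⟨s, s, fun x hx => ?_⟩
            by_contra hx'
            push_neg at hx'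
            have : x ∈ S.erase s := Finset.mem_erase.mpr ⟨hx'.1, hx⟩
            simp [he] at this
          · refine ⟨s, t, fun x hx => ?_⟩
            by_contra hx'
            push_neg at hx'
            have h1 : x ∈ (S.erase s).erase t :=
              Finset.mem_erase.mpr ⟨hx'.2, Finset.mem_erase.mpr ⟨hx'.1, hx⟩⟩
            have hc1 : 1 ≤ ((S.erase s).erase t).card := Finset.card_pos.mpr ⟨x, h1⟩
            have hc2 : t ∈ S.erase s := ht
            have hc3 : s ∈ S := hs
            have e1 : ((S.erase s).erase t).card = (S.erase s).card - 1 :=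
              Finset.card_erase_of_mem hc2
            have e2 : (S.erase s).card = S.card - 1 := Finset.card_erase_of_mem hc3
            omega
      obtain ⟨e, e', he, he', hne, h1, h2⟩ := pairFail s t
      obtain ⟨x, hxS, hxne⟩ := hS e he e' he' hne
      rcases hst x (by simpa using hxS) with rfl | rfl
      · exact hxne h1
      · exact hxne h2
  -- vdim
  have hVMG : IsVMG G ↑({a, c} : Finset V) := by
    intro x x' hne
    rcases hv x with h | h | h | h | h <;>
      rcases hv x' with h' | h' | h' | h' | h' <;>
      rw [h, h'] at hne ⊢ <;>
      first
        | exact absurd rfl hne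
        | (refine ⟨a, by simp, ?_⟩; omega)
        | (refine ⟨c, by simp, ?_⟩; omega)
  have cardac : ({a, c} : Finset V).card = 2 := by
    rw [Finset.card_insert_of_notMem (by simp [nac]), Finset.card_singleton]
  have pairV : ∀ s : V, ∃ x x' : V, x ≠ x' ∧ G.dist s x = G.dist s x' := by
    intro s
    rcases hv s with h | h | h | h | h <;> rw [h]
    · exact ⟨a, b, nab, by omega⟩
    · exact ⟨w, b, nwb, by omega⟩
    · exact ⟨w, a, nwa, by omega⟩
    · exact ⟨w, d, nwd, by omega⟩
    · exact ⟨w, c, nwc, by omega⟩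
  have hvdim : vdim G = 2 := by
    have hmem2 : 2 ∈ {n | ∃ S : Finset V, IsVMG G ↑S ∧ S.card = n} :=
      ⟨({a, c} : Finset V), hVMG, cardac⟩
    unfold vdim
    apply le_antisymm
    · exact Nat.sInf_le hmem2
    · apply le_csInf ⟨2, hmem2⟩
      rintro n ⟨S, hS, rfl⟩
      by_contra hlt
      push_neg at hlt
      have hS1 : S.card ≤ 1 := by omega
      rcases S.eq_empty_or_nonempty with rfl | ⟨s, hs⟩
      · obtain ⟨x, hx, _⟩ := hS w a nwa
        simp at hx
      · obtain ⟨x, x', hxx, hdd⟩ := pairV s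
        obtain ⟨u, huS, hud⟩ := hS x x' hxx
        have : u = s := Finset.card_le_one.mp hS1 u (by simpa using huS) s hs
        subst this
        exact hud hdd
  -- counting
  have hcardV : Fintype.card V = 5 := by
    have huniv : (Finset.univ : Finset V) = {w, a, b, c, d} := by
      ext v
      simp only [Finset.mem_univ, Finset.mem_insert, Finset.mem_singleton, true_iff]
      exact hv v
    rw [← Finset.card_univ, huniv,
      Finset.card_insert_of_notMem (by simp [nwa, nwb, nwc, nwd]),
      Finset.card_insert_of_notMem (by simp [nab, nac, nad]),
      Finset.card_insert_of_notMem (by simp [nbc, nbd]),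
      Finset.card_insert_of_notMem (by simp [ncd]), Finset.card_singleton]
  have hES : G.edgeSet = {s(w, a), s(a, b), s(b, w), s(w, c), s(c, d), s(d, w)} := by
    ext e
    simp only [Set.mem_insert_iff, Set.mem_singleton_iff]
    constructor
    · exact hEc e
    · rintro (rfl | rfl | rfl | rfl | rfl | rfl) <;> assumption
  have hncard : G.edgeSet.ncard = 6 := by
    rw [hES,
      Set.ncard_insert_of_notMem (by
        simp only [Set.mem_insert_iff, Set.mem_singleton_iff, not_or]
        exact ⟨sym2ne17 (Or.inl nwa) (Or.inl nwb), sym2ne17 (Or.inl nwb) (Or.inr nab),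
          sym2ne17 (Or.inr nac) (Or.inl nwc), sym2ne17 (Or.inl nwc) (Or.inl nwd),
          sym2ne17 (Or.inl nwd) (Or.inr nad)⟩) (Set.toFinite _),
      Set.ncard_insert_of_notMem (by
        simp only [Set.mem_insert_iff, Set.mem_singleton_iff, not_or]
        exact ⟨sym2ne17 (Or.inl nab) (Or.inl naw), sym2ne17 (Or.inl naw) (Or.inl nac),
          sym2ne17 (Or.inl nac) (Or.inl nad), sym2ne17 (Or.inl nad) (Or.inl naw)⟩)
        (Set.toFinite _),
      Set.ncard_insert_of_notMem (by
        simp only [Set.mem_insert_iff, Set.mem_singleton_iff, not_or]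
        exact ⟨sym2ne17 (Or.inl nbw) (Or.inl nbc), sym2ne17 (Or.inl nbc) (Or.inl nbd),
          sym2ne17 (Or.inl nbd) (Or.inl nbw)⟩) (Set.toFinite _),
      Set.ncard_insert_of_notMem (by
        simp only [Set.mem_insert_iff, Set.mem_singleton_iff, not_or]
        exact ⟨sym2ne17 (Or.inl nwc) (Or.inl nwd), sym2ne17 (Or.inl nwd) (Or.inr ncd)⟩)
        (Set.toFinite _),
      Set.ncard_insert_of_notMem (by
        simp only [Set.mem_singleton_iff]
        exact sym2ne17 (Or.inl ncd) (Or.inl ncw)) (Set.toFinite _),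
      Set.ncard_singleton]
  refine ⟨hedim, hvdim, ?_, ?_⟩ <;> rw [hncard, hcardV] <;> norm_num
end
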